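/- arXiv:1503.00511 — 3 statements merged into one kernel-verified Lean document; each statement's English description precedes it below -/
import Mathlib

section
/- Let n be a positive integer and g a nonnegative integer with gcd(n,g)=1, and suppose f(k)>0, g(k)>0, a≥0, b>0 and f(k)+g(k)−1≠0. Then the spectral norm of the g-circulant matrix C_{n,g}(H) with first row (H_{k,1},…,H_{k,n}) equals (H_{k,n+1} + g(k)·H_{k,n} − H_{k,1} − g(k)·H_{k,0}) / (f(k) + g(k) − 1). -/
/-- The `g`-circulant matrix of size `n` with first row `(a 0, a 1, …, a (n-1))`:
its `(i,j)` entry (0-indexed) equals `a ((j - i*g) mod n)`. -/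
def gCirc {α : Type*} (n g : ℕ) (a : ℕ → α) : Matrix (Fin n) (Fin n) α :=
  Matrix.of fun i j => a ((j.val + (n - (i.val * g) % n)) % n)

/-- The spectral norm (operator 2-norm) of a real square matrix. -/
noncomputable def matSpectralNorm {n : ℕ} (A : Matrix (Fin n) (Fin n) ℝ) : ℝ :=
  ‖Matrix.toEuclideanCLM (𝕜 := ℝ) A‖

lemma spectral_doubly {n : ℕ} (hn : 0 < n) (A : Matrix (Fin n) (Fin n) ℝ) (S : ℝ)
    (h0 : ∀ i j, 0 ≤ A i j) (hrow : ∀ i, ∑ j, A i j = S) (hcol : ∀ j, ∑ i, A i j = S) :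
    matSpectralNorm A = S := by
  have hS : 0 ≤ S := by
    rw [← hrow ⟨0, hn⟩]; exact Finset.sum_nonneg fun j _ => h0 _ j
  set T := Matrix.toEuclideanCLM (𝕜 := ℝ) A with hT
  have hTx : ∀ (x : EuclideanSpace ℝ (Fin n)) (i : Fin n), T x i = ∑ j, A i j * x j := by
    intro x i
    have : T x i = A.mulVec x i := rfl
    rw [this, Matrix.mulVec, dotProduct]
  have hnorm : ∀ x : EuclideanSpace ℝ (Fin n), ‖x‖ = Real.sqrt (∑ i, (x i) ^ 2) := by
    intro x
    rw [EuclideanSpace.norm_eq]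
    congr 1; apply Finset.sum_congr rfl; intro i _
    rw [Real.norm_eq_abs, sq_abs]
  have upper : ∀ x : EuclideanSpace ℝ (Fin n), ‖T x‖ ≤ S * ‖x‖ := by
    intro x
    have key : ∑ i, (T x i) ^ 2 ≤ S ^ 2 * ∑ j, (x j) ^ 2 := by
      have step : ∀ i : Fin n, (T x i) ^ 2 ≤ S * ∑ j, A i j * (x j) ^ 2 := by
        intro i
        rw [hTx x i]
        have cs := Finset.sum_mul_sq_le_sq_mul_sq Finset.univ
          (fun j => Real.sqrt (A i j)) (fun j => Real.sqrt (A i j) * x j)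
        calc (∑ j, A i j * x j) ^ 2
            = (∑ j, Real.sqrt (A i j) * (Real.sqrt (A i j) * x j)) ^ 2 := by
              congr 1; apply Finset.sum_congr rfl; intro j _
              rw [← mul_assoc, Real.mul_self_sqrt (h0 i j)]
          _ ≤ (∑ j, Real.sqrt (A i j) ^ 2) * ∑ j, (Real.sqrt (A i j) * x j) ^ 2 := cs
          _ = S * ∑ j, A i j * (x j) ^ 2 := by
              congr 1
              · rw [← hrow i]; apply Finset.sum_congr rfl; intro j _
                exact Real.sq_sqrt (h0 i j)
              · apply Finset.sum_congr rfl; intro j _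
                rw [mul_pow, Real.sq_sqrt (h0 i j)]
      calc ∑ i, (T x i) ^ 2 ≤ ∑ i : Fin n, (S * ∑ j, A i j * (x j) ^ 2) :=
            Finset.sum_le_sum fun i _ => step i
        _ = S * ∑ j, (∑ i, A i j) * (x j) ^ 2 := by
            rw [← Finset.mul_sum, Finset.sum_comm]
            congr 1; apply Finset.sum_congr rfl; intro j _
            rw [Finset.sum_mul]
        _ = S ^ 2 * ∑ j, (x j) ^ 2 := by
            simp_rw [hcol]; rw [← Finset.mul_sum]; ring
    rw [hnorm, hnorm]
    calc Real.sqrt (∑ i, (T x i) ^ 2) ≤ Real.sqrt (S ^ 2 * ∑ j, (x j) ^ 2) :=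
          Real.sqrt_le_sqrt key
      _ = S * Real.sqrt (∑ j, (x j) ^ 2) := by
          rw [Real.sqrt_mul (sq_nonneg S), Real.sqrt_sq hS]
  have hub : ‖T‖ ≤ S := ContinuousLinearMap.opNorm_le_bound _ hS upper
  have hlb : S ≤ ‖T‖ := by
    set x : EuclideanSpace ℝ (Fin n) := (WithLp.equiv 2 _).symm (fun _ => (1:ℝ)) with hx
    have hxi : ∀ i : Fin n, x i = 1 := fun i => rfl
    have hxn : ‖x‖ = Real.sqrt n := by
      rw [hnorm]; congr 1; simp [hxi]
    have hTxn : ‖T x‖ = S * Real.sqrt n := by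
      rw [hnorm]
      have : ∀ i : Fin n, T x i = S := by
        intro i; rw [hTx]; simp only [hxi, mul_one]; exact hrow i
      simp_rw [this]
      rw [Finset.sum_const, Finset.card_univ, Fintype.card_fin, nsmul_eq_mul,
        Real.sqrt_mul (Nat.cast_nonneg n), Real.sqrt_sq hS]
      ring
    have := T.le_opNorm x
    rw [hTxn, hxn] at this
    have hpos : (0:ℝ) < Real.sqrt n := Real.sqrt_pos.mpr (by exact_mod_cast hn)
    exact le_of_mul_le_mul_right this hpos
  exact le_antisymm hub hlb


/-- Spectral norm of the g-circulant matrix of generalized k-Horadam numbers. -/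
theorem spectralNorm_gCirc_horadam
    (k : ℝ) (hk : 0 < k) (f g : ℝ → ℝ) (hfg : f k ^ 2 + 4 * g k > 0)
    (a b : ℝ) (H : ℕ → ℝ) (hH0 : H 0 = a) (hH1 : H 1 = b)
    (hrec : ∀ m : ℕ, H (m + 2) = f k * H (m + 1) + g k * H m)
    (n r : ℕ) (hn : 0 < n) (hgcd : Nat.gcd n r = 1)
    (hf : 0 < f k) (hg : 0 < g k) (ha : 0 ≤ a) (hb : 0 < b)
    (hden : f k + g k - 1 ≠ 0) :
    matSpectralNorm (gCirc n r (fun m => H (m + 1))) =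
      (H (n + 1) + g k * H n - H 1 - g k * H 0) / (f k + g k - 1) := by
  haveI : NeZero n := ⟨hn.ne'⟩
  -- positivity of H
  have hpos : ∀ m : ℕ, 0 ≤ H m ∧ 0 < H (m + 1) := by
    intro m
    induction m with
    | zero => exact ⟨hH0 ▸ ha, hH1 ▸ hb⟩
    | succ p ih =>
      refine ⟨ih.2.le, ?_⟩
      rw [hrec p]
      have := add_pos_of_pos_of_nonneg (mul_pos hf ih.2) (mul_nonneg hg.le ih.1)
      exact this
  set S : ℝ := ∑ m : Fin n, H (m.1 + 1) with hSdef
  -- entry index and its cast to ZMod n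
  have hidx : ∀ i j : Fin n,
      (((j.1 + (n - (i.1 * r) % n)) % n : ℕ) : ZMod n) = (j.1 : ZMod n) - (i.1 : ZMod n) * r := by
    intro i j
    rw [ZMod.natCast_mod, Nat.cast_add, Nat.cast_sub (Nat.mod_lt _ hn).le, ZMod.natCast_mod,
      ZMod.natCast_self, Nat.cast_mul]
    ring
  have hfin : ∀ u v : Fin n, ((u.1 : ℕ) : ZMod n) = ((v.1 : ℕ) : ZMod n) → u = v := by
    intro u v h
    have hu := ZMod.val_cast_of_lt u.2
    have hv := ZMod.val_cast_of_lt v.2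
    exact Fin.ext (by rw [← hu, ← hv, h])
  have hrunit : IsUnit ((r : ℕ) : ZMod n) :=
    (ZMod.unitOfCoprime r (Nat.coprime_comm.mp hgcd)).isUnit
  set A := gCirc n r (fun m => H (m + 1)) with hA
  have hAentry : ∀ i j : Fin n, A i j = H ((j.1 + (n - (i.1 * r) % n)) % n + 1) := fun i j => rfl
  have h0 : ∀ i j : Fin n, 0 ≤ A i j := by
    intro i j; rw [hAentry]; exact (hpos _).2.le
  -- row sums
  have hrow : ∀ i : Fin n, ∑ j, A i j = S := by
    intro i
    have hinj : Function.Injective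
        (fun j : Fin n => (⟨(j.1 + (n - (i.1 * r) % n)) % n, Nat.mod_lt _ hn⟩ : Fin n)) := by
      intro j1 j2 h
      apply hfin
      have h1 := hidx i j1
      have h2 := hidx i j2
      have : (((j1.1 + (n - (i.1 * r) % n)) % n : ℕ) : ZMod n)
           = (((j2.1 + (n - (i.1 * r) % n)) % n : ℕ) : ZMod n) := by
        exact_mod_cast congrArg (fun x : Fin n => ((x.1 : ℕ) : ZMod n)) h
      rw [h1, h2] at this
      linear_combination this
    exact Fintype.sum_bijective _ (Finite.injective_iff_bijective.mp hinj)
      _ (fun m : Fin n => H (m.1 + 1)) (fun j => rfl)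
  -- column sums
  have hcol : ∀ j : Fin n, ∑ i, A i j = S := by
    intro j
    have hinj : Function.Injective
        (fun i : Fin n => (⟨(j.1 + (n - (i.1 * r) % n)) % n, Nat.mod_lt _ hn⟩ : Fin n)) := by
      intro i1 i2 h
      apply hfin
      have h1 := hidx i1 j
      have h2 := hidx i2 j
      have heq : (((j.1 + (n - (i1.1 * r) % n)) % n : ℕ) : ZMod n)
           = (((j.1 + (n - (i2.1 * r) % n)) % n : ℕ) : ZMod n) := by
        exact_mod_cast congrArg (fun x : Fin n => ((x.1 : ℕ) : ZMod n)) h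
      rw [h1, h2] at heq
      have : (i1.1 : ZMod n) * r = (i2.1 : ZMod n) * r := by linear_combination -heq
      exact hrunit.mul_left_injective this
    exact Fintype.sum_bijective _ (Finite.injective_iff_bijective.mp hinj)
      _ (fun m : Fin n => H (m.1 + 1)) (fun i => rfl)
  have hspec : matSpectralNorm A = S := spectral_doubly hn A S h0 hrow hcol
  have tele : ∀ N : ℕ, (f k + g k - 1) * (∑ m ∈ Finset.range N, H (m + 1))
      = H (N + 1) + g k * H N - H 1 - g k * H 0 := by
    intro N
    induction N with
    | zero => simp only [Finset.sum_range_zero, mul_zero]; ring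
    | succ p ih =>
      rw [Finset.sum_range_succ, mul_add, ih, hrec p]; ring
  have hSr : S = ∑ m ∈ Finset.range n, H (m + 1) :=
    Fin.sum_univ_eq_sum_range (fun m => H (m + 1)) n
  rw [hspec, eq_div_iff hden]
  rw [hSr]
  linear_combination tele n
end

section
/- Let n be a positive integer and g a nonnegative integer with gcd(n,g)=1. Then the spectral norm of the g-circulant matrix C_{n,g}(F) with first row (F_1,F_2,…,F_n) equals F_{n+2} − 1. -/
/-!
Every row of `C_{n,g}(F)` is a cyclic shift of `(F_1, …, F_n)`, and so is every column, because
`g` is invertible mod `n`. Hence the matrix is nonnegative with all row and column sums equal to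
`F_1 + ⋯ + F_n = F_{n+2} - 1`. For such a matrix the Schur test (Cauchy–Schwarz applied row by
row) bounds the spectral norm by that common sum, and the all-ones vector is an eigenvector
attaining it.
-/

open Matrix

theorem ContinuousLinearMap.norm_le_opNorm_of_apply_eq_smul {𝕜 E : Type*}
    [NontriviallyNormedField 𝕜] [NormedAddCommGroup E] [NormedSpace 𝕜 E] (f : E →L[𝕜] E)
    {x : E} (hx : x ≠ 0) {c : 𝕜} (h : f x = c • x) : ‖c‖ ≤ ‖f‖ :=
  le_of_mul_le_mul_right (by simpa [h, norm_smul] using f.le_opNorm x) (norm_pos_iff.2 hx)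

section NonnegMatrix

variable {ι : Type*} [Fintype ι] {A : Matrix ι ι ℝ}

theorem Matrix.sq_mulVec_apply_le (h0 : ∀ i j, 0 ≤ A i j) (x : ι → ℝ) (i : ι) :
    (A *ᵥ x) i ^ 2 ≤ (∑ j, A i j) * ∑ j, A i j * x j ^ 2 :=
  Finset.sum_sq_le_sum_mul_sum_of_sq_le_mul _ (fun j _ => h0 i j)
    (fun j _ => mul_nonneg (h0 i j) (sq_nonneg _)) (fun j _ => le_of_eq (by ring))

theorem Matrix.sum_sq_mulVec_le (h0 : ∀ i j, 0 ≤ A i j) {R C : ℝ} (hR : 0 ≤ R)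
    (hrow : ∀ i, ∑ j, A i j ≤ R) (hcol : ∀ j, ∑ i, A i j ≤ C) (x : ι → ℝ) :
    ∑ i, (A *ᵥ x) i ^ 2 ≤ R * C * ∑ j, x j ^ 2 :=
  calc ∑ i, (A *ᵥ x) i ^ 2 ≤ ∑ i, R * ∑ j, A i j * x j ^ 2 := by
        gcongr with i
        refine (sq_mulVec_apply_le h0 x i).trans (mul_le_mul_of_nonneg_right (hrow i) ?_)
        exact Finset.sum_nonneg fun j _ => mul_nonneg (h0 i j) (sq_nonneg _)
    _ = R * ∑ j, (∑ i, A i j) * x j ^ 2 := by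
        rw [← Finset.mul_sum, Finset.sum_comm]; simp only [Finset.sum_mul]
    _ ≤ R * ∑ j, C * x j ^ 2 := by gcongr with j; exact hcol j
    _ = R * C * ∑ j, x j ^ 2 := by rw [← Finset.mul_sum, mul_assoc]

theorem Matrix.norm_toEuclideanCLM_le_sqrt_mul_of_nonneg [DecidableEq ι] [Nonempty ι]
    (h0 : ∀ i j, 0 ≤ A i j) {R C : ℝ} (hrow : ∀ i, ∑ j, A i j ≤ R)
    (hcol : ∀ j, ∑ i, A i j ≤ C) :
    ‖toEuclideanCLM (𝕜 := ℝ) A‖ ≤ √(R * C) := by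
  have hR : 0 ≤ R :=
    (Finset.sum_nonneg fun j _ => h0 (Classical.arbitrary ι) j).trans (hrow _)
  refine ContinuousLinearMap.opNorm_le_bound _ (Real.sqrt_nonneg _) fun x => ?_
  rw [← Real.sqrt_sq (norm_nonneg x), ← Real.sqrt_mul' _ (sq_nonneg _)]
  refine Real.le_sqrt_of_sq_le ?_
  rw [EuclideanSpace.real_norm_sq_eq, EuclideanSpace.real_norm_sq_eq]
  exact sum_sq_mulVec_le h0 hR hrow hcol x.ofLp

theorem Matrix.norm_toEuclideanCLM_eq_of_nonneg_of_sum_eq [DecidableEq ι] [Nonempty ι]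
    (h0 : ∀ i j, 0 ≤ A i j) {S : ℝ} (hrow : ∀ i, ∑ j, A i j = S)
    (hcol : ∀ j, ∑ i, A i j = S) :
    ‖toEuclideanCLM (𝕜 := ℝ) A‖ = S := by
  have hS : 0 ≤ S := hrow (Classical.arbitrary ι) ▸ Finset.sum_nonneg fun j _ => h0 _ j
  refine le_antisymm ?_ ?_
  · simpa [Real.sqrt_mul_self hS] using
      norm_toEuclideanCLM_le_sqrt_mul_of_nonneg h0 (fun i => (hrow i).le) (fun j => (hcol j).le)
  · have hone : toEuclideanCLM (𝕜 := ℝ) A (WithLp.toLp 2 1) = S • WithLp.toLp 2 1 := by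
      ext i; simpa [mulVec, dotProduct] using hrow i
    simpa [abs_of_nonneg hS] using
      (toEuclideanCLM (𝕜 := ℝ) A).norm_le_opNorm_of_apply_eq_smul (by simp) hone

end NonnegMatrix

theorem Nat.sum_range_fib_succ_add_one (n : ℕ) :
    ∑ k ∈ Finset.range n, fib (k + 1) + 1 = fib (n + 2) := by
  rw [fib_succ_eq_succ_sum (n + 1), Finset.sum_range_succ']
  simp

section GCirculant

open Fin.NatCast

theorem Fin.mul_natCast_injective {n g : ℕ} [NeZero n] (hg : n.Coprime g) :
    Function.Injective fun i : Fin n => i * (g : Fin n) := by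
  intro i₁ i₂ h
  have hmod : i₁.val * g ≡ i₂.val * g [MOD n] := by
    simpa [Fin.ext_iff, Fin.val_mul, Nat.ModEq] using h
  exact Fin.ext ((hmod.cancel_right_of_coprime hg).eq_of_lt_of_lt i₁.isLt i₂.isLt)

variable {α : Type*} {n : ℕ} [NeZero n]

theorem gCirc_apply (g : ℕ) (a : ℕ → α) (i j : Fin n) :
    gCirc n g a i j = a (j - i * (g : Fin n) : Fin n) := by
  simp [gCirc, Fin.sub_def, Fin.val_mul, Nat.add_comm]

variable [AddCommMonoid α]

theorem gCirc_sum_row (g : ℕ) (a : ℕ → α) (i : Fin n) :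
    ∑ j, gCirc n g a i j = ∑ k : Fin n, a k := by
  simp_rw [gCirc_apply]
  exact Equiv.sum_comp (Equiv.subRight _) fun k : Fin n => a k

theorem gCirc_sum_col {g : ℕ} (hg : n.Coprime g) (a : ℕ → α) (j : Fin n) :
    ∑ i, gCirc n g a i j = ∑ k : Fin n, a k := by
  simp_rw [gCirc_apply]
  exact (Finite.injective_iff_bijective.mp ((sub_right_injective (b := j)).comp
    (Fin.mul_natCast_injective hg))).sum_comp fun k : Fin n => a k

end GCirculant

/-- Spectral norm of the g-circulant matrix of Fibonacci numbers. -/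
theorem spectralNorm_gCirc_fib
    (n r : ℕ) (hn : 0 < n) (hgcd : Nat.gcd n r = 1) :
    matSpectralNorm (gCirc n r (fun m => (Nat.fib (m + 1) : ℝ))) =
      (Nat.fib (n + 2) : ℝ) - 1 := by
  have : NeZero n := ⟨hn.ne'⟩
  have hsum : ∑ k : Fin n, (Nat.fib (k + 1) : ℝ) = Nat.fib (n + 2) - 1 := by
    rw [Fin.sum_univ_eq_sum_range (fun k => (Nat.fib (k + 1) : ℝ)),
      ← Nat.sum_range_fib_succ_add_one]
    push_cast
    ring
  exact norm_toEuclideanCLM_eq_of_nonneg_of_sum_eq (A := gCirc n r _)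
    (fun _ _ => Nat.cast_nonneg _) (fun i => (gCirc_sum_row r _ i).trans hsum)
    (fun j => (gCirc_sum_col hgcd _ j).trans hsum)
end

section
/- Let n≥2 be an integer and g a nonnegative integer with gcd(n,g)=1. Set M = g(k)(H_{k,n} − H_{k,0}) and N = H_{k,1} − H_{k,n+1}, and assume H_{k,1} ≠ 0 and M ≠ 0. Then det C_{n,g}(H) = det(Q_g) · [ H_{k,1}·N^{n−1} + H_{k,1}·M^{n−2} · Σ_{i=1}^{n−1} ( −H_{k,2}H_{k,i+1}/H_{k,1} + H_{k,i+2} ) · (N/M)^{i−1} ]. -/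
/-- `Q_g`: the `g`-circulant matrix with first row `(1,0,…,0)`. -/
def Qg (n g : ℕ) : Matrix (Fin n) (Fin n) ℝ :=
  gCirc n g (fun m => if m = 0 then (1 : ℝ) else 0)

open Matrix

theorem add_sub_mod_eq_ite {n i j : ℕ} (hi : i < n) (hj : j < n) :
    (j + (n - i)) % n = if i ≤ j then j - i else j + (n - i) := by
  split_ifs
  · rw [show j + (n - i) = j - i + n by omega, Nat.add_mod_right, Nat.mod_eq_of_lt (by omega)]
  · exact Nat.mod_eq_of_lt (by omega)

section GCirculant

variable {α : Type*}

theorem gCirc_one_apply (n : ℕ) (a : ℕ → α) (i j : Fin n) :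
    gCirc n 1 a i j = a ((j + (n - i)) % n) := by
  simp [gCirc, Nat.mod_eq_of_lt i.isLt]

def gCircRow (n g : ℕ) (i : Fin n) : Fin n := ⟨i * g % n, Nat.mod_lt _ i.pos⟩

theorem gCirc_eq_submatrix (n g : ℕ) (a : ℕ → α) :
    gCirc n g a = (gCirc n 1 a).submatrix (gCircRow n g) id := by
  ext i j
  simp [gCirc, gCircRow]

theorem gCirc_single_zero_eq_submatrix [Zero α] [One α] (n g : ℕ) :
    gCirc n g (fun m => if m = 0 then (1 : α) else 0) =
      (1 : Matrix (Fin n) (Fin n) α).submatrix (gCircRow n g) id := by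
  ext i j
  rw [gCirc_eq_submatrix, submatrix_apply, submatrix_apply, id_eq, gCirc_one_apply, one_apply,
    add_sub_mod_eq_ite (gCircRow n g i).isLt j.isLt]
  simp only [Fin.ext_iff]
  split_ifs <;> first | rfl | omega

theorem gCirc_eq_mul_gCirc_one [NonAssocSemiring α] (n g : ℕ) (a : ℕ → α) :
    gCirc n g a = gCirc n g (fun m => if m = 0 then (1 : α) else 0) * gCirc n 1 a := by
  rw [gCirc_single_zero_eq_submatrix, gCirc_eq_submatrix n g]
  exact (one_submatrix_mul (gCircRow n g) (Equiv.refl _) _).symm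

end GCirculant

section UpperBidiagonal

variable {R : Type*} [CommRing R]

def upperBidiagonal (n : ℕ) (d e : R) : Matrix (Fin n) (Fin n) R :=
  of fun i j => if i = j then d else if (i : ℕ) + 1 = j then e else 0

theorem det_upperBidiagonal (n : ℕ) (d e : R) : (upperBidiagonal n d e).det = d ^ n := by
  rw [det_of_isUpperTriangular]
  · simp [upperBidiagonal]
  · intro i j (hij : j < i)
    simp only [upperBidiagonal, of_apply, Fin.ext_iff]
    rw [Fin.lt_def] at hij
    rw [if_neg (by omega), if_neg (by omega)]

theorem det_updateCol_zero_upperBidiagonal (c d : R) :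
    ∀ (m : ℕ) (w : Fin (m + 1) → R),
      ((upperBidiagonal (m + 1) d (-c)).updateCol 0 w).det =
        ∑ i, w i * c ^ (i : ℕ) * d ^ (m - i)
  | 0, w => by simp
  | m + 1, w => by
    have minor_zero : ((upperBidiagonal (m + 2) d (-c)).updateCol 0 w).submatrix Fin.succ
        (Fin.succAbove 0) = upperBidiagonal (m + 1) d (-c) := by
      ext i j
      simp [upperBidiagonal]
    have minor_one : ((upperBidiagonal (m + 2) d (-c)).updateCol 0 w).submatrix Fin.succ
        (Fin.succAbove 1) = (upperBidiagonal (m + 1) d (-c)).updateCol 0 (w ∘ Fin.succ) := by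
      ext i j
      cases j using Fin.cases <;> simp [upperBidiagonal, Fin.succAbove]
    rw [det_succ_row_zero, Fin.sum_univ_succ, Fin.sum_univ_succ, Fin.succ_zero_eq_one,
      minor_zero, minor_one, det_upperBidiagonal, det_updateCol_zero_upperBidiagonal c d m,
      Fin.sum_univ_succ (n := m + 1)]
    simp [upperBidiagonal, Finset.mul_sum, (Fin.succ_ne_zero _).symm, pow_succ]
    exact Finset.sum_congr rfl fun i _ => by ring

theorem det_updateCol_one_updateCol_zero_upperBidiagonal (c d : R) (m : ℕ)
    (u v : Fin (m + 2) → R) :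
    (((upperBidiagonal (m + 2) d (-c)).updateCol 0 u).updateCol 1 v).det =
      u 0 * ∑ i : Fin (m + 1), v i.succ * c ^ (i : ℕ) * d ^ (m - i) -
        v 0 * ∑ i : Fin (m + 1), u i.succ * c ^ (i : ℕ) * d ^ (m - i) := by
  have minor_zero : (((upperBidiagonal (m + 2) d (-c)).updateCol 0 u).updateCol 1 v).submatrix
      Fin.succ (Fin.succAbove 0) =
        (upperBidiagonal (m + 1) d (-c)).updateCol 0 (v ∘ Fin.succ) := by
    ext i j
    cases j using Fin.cases <;> simp [upperBidiagonal, Fin.succ_succ_ne_one]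
  have minor_one : (((upperBidiagonal (m + 2) d (-c)).updateCol 0 u).updateCol 1 v).submatrix
      Fin.succ (Fin.succAbove 1) =
        (upperBidiagonal (m + 1) d (-c)).updateCol 0 (u ∘ Fin.succ) := by
    ext i j
    cases j using Fin.cases <;> simp [upperBidiagonal, Fin.succAbove, Fin.succ_succ_ne_one]
  rw [det_succ_row_zero, Fin.sum_univ_succ, Fin.sum_univ_succ, Fin.succ_zero_eq_one,
    minor_zero, minor_one, det_updateCol_zero_upperBidiagonal, det_updateCol_zero_upperBidiagonal]
  simp [upperBidiagonal, (Fin.succ_ne_zero _).symm, Fin.succ_succ_ne_one, sub_eq_add_neg]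

end UpperBidiagonal

section ColumnOperation

variable {R : Type*} [CommRing R] {n : ℕ}

def colShift (n k : ℕ) : Matrix (Fin n) (Fin n) R :=
  of fun l j => if 2 ≤ (j : ℕ) ∧ (l : ℕ) + k = j then 1 else 0

theorem mul_colShift_apply (A : Matrix (Fin n) (Fin n) R) {k : ℕ} (hk : k ≤ 2) (i j : Fin n) :
    (A * colShift n k : Matrix (Fin n) (Fin n) R) i j =
      if h : 2 ≤ (j : ℕ) then A i ⟨j - k, by omega⟩ else 0 := by
  rw [mul_apply]
  split_ifs with hj
  · rw [Finset.sum_eq_single ⟨j - k, by omega⟩]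
    · simp [colShift, hj, show j - k + k = (j : ℕ) by omega]
    · intro l _ hl
      have : (l : ℕ) ≠ j - k := fun h => hl (Fin.ext h)
      simp only [colShift, of_apply]
      rw [if_neg (by omega), mul_zero]
    · simp
  · simp [colShift, hj]

def recurrenceColOp (n : ℕ) (p q : R) : Matrix (Fin n) (Fin n) R :=
  1 - p • colShift n 1 - q • colShift n 2

theorem det_recurrenceColOp (p q : R) : (recurrenceColOp n p q).det = 1 := by
  rw [det_of_isUpperTriangular]
  · simp [recurrenceColOp, colShift]
  · intro i j (hij : j < i)
    rw [Fin.lt_def] at hij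
    simp only [recurrenceColOp, colShift, Matrix.sub_apply, Matrix.smul_apply, one_apply, of_apply,
      Fin.ext_iff]
    rw [if_neg (by omega), if_neg (by omega), if_neg (by omega)]
    simp

theorem mul_recurrenceColOp_apply_of_two_le (A : Matrix (Fin n) (Fin n) R) (p q : R)
    (i j : Fin n) (hj : 2 ≤ (j : ℕ)) :
    (A * recurrenceColOp n p q) i j =
      A i j - p * A i ⟨j - 1, by omega⟩ - q * A i ⟨j - 2, by omega⟩ := by
  simp [recurrenceColOp, mul_sub, mul_colShift_apply _ one_le_two, mul_colShift_apply _ le_rfl, hj]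

theorem mul_recurrenceColOp_apply_of_lt_two (A : Matrix (Fin n) (Fin n) R) (p q : R)
    (i j : Fin n) (hj : (j : ℕ) < 2) : (A * recurrenceColOp n p q) i j = A i j := by
  simp [recurrenceColOp, mul_sub, mul_colShift_apply _ one_le_two, mul_colShift_apply _ le_rfl,
    show ¬ 2 ≤ (j : ℕ) by omega]

end ColumnOperation

section Recurrence

variable {R : Type*} [CommRing R] {p q : R} {H : ℕ → R}

theorem recurrence_mod_residual (hrec : ∀ m, H (m + 2) = p * H (m + 1) + q * H m) {n : ℕ}
    (hn : 2 ≤ n) (k : ℕ) :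
    H ((k + 2) % n + 1) - p * H ((k + 1) % n + 1) - q * H (k % n + 1) =
      if (k + 2) % n = 0 then H 1 - H (n + 1)
      else if (k + 2) % n = 1 then -(q * (H n - H 0)) else 0 := by
  rw [← Nat.mod_add_mod k n 2, ← Nat.mod_add_mod k n 1]
  have := Nat.mod_lt k (by omega : 0 < n)
  generalize k % n = r at this ⊢
  obtain h | rfl | rfl : r + 2 < n ∨ n = r + 2 ∨ n = r + 1 := by omega
  · rw [Nat.mod_eq_of_lt h, Nat.mod_eq_of_lt (by omega), if_neg (by omega), if_neg (by omega),
      hrec (r + 1)]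
    ring
  · simp [hrec (r + 1)]
    ring
  · rw [show r + 2 = 1 + (r + 1) by ring, Nat.add_mod_right, Nat.mod_self,
      Nat.mod_eq_of_lt (by omega : 1 < r + 1)]
    simp [hrec 0]
    ring

theorem gCirc_one_mul_recurrenceColOp (hrec : ∀ m, H (m + 2) = p * H (m + 1) + q * H m)
    (m : ℕ) :
    gCirc (m + 2) 1 (fun k => H (k + 1)) * recurrenceColOp (m + 2) p q =
      ((upperBidiagonal (m + 2) (H 1 - H (m + 3)) (-(q * (H (m + 2) - H 0)))).updateCol 0
        (fun i => gCirc (m + 2) 1 (fun k => H (k + 1)) i 0)).updateCol 1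
        (fun i => gCirc (m + 2) 1 (fun k => H (k + 1)) i 1) := by
  ext i j
  rcases lt_or_ge (j : ℕ) 2 with hj | hj
  · rw [mul_recurrenceColOp_apply_of_lt_two _ _ _ _ _ hj]
    obtain rfl | rfl : j = 0 ∨ j = 1 := by
      rw [Fin.ext_iff, Fin.ext_iff, Fin.val_zero, Fin.val_one]
      omega
    all_goals simp
  · have hi := i.isLt
    have residual := recurrence_mod_residual hrec (n := m + 2) (by omega) (j - 2 + (m + 2 - i))
    rw [show j - 2 + (m + 2 - i) + 2 = j + (m + 2 - i) by omega,
      show j - 2 + (m + 2 - i) + 1 = j - 1 + (m + 2 - i) by omega] at residual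
    rw [mul_recurrenceColOp_apply_of_two_le _ _ _ _ _ hj, gCirc_one_apply, gCirc_one_apply,
      gCirc_one_apply]
    rw [residual, add_sub_mod_eq_ite i.isLt j.isLt]
    have hj0 : j ≠ 0 := fun h => by simp [h] at hj
    have hj1 : j ≠ 1 := fun h => by simp [h] at hj
    simp only [updateCol_apply, hj0, hj1, if_false, upperBidiagonal, of_apply, Fin.ext_iff]
    split_ifs <;> first | rfl | omega

theorem det_gCirc_one_of_recurrence (hrec : ∀ m, H (m + 2) = p * H (m + 1) + q * H m)
    (m : ℕ) :
    (gCirc (m + 2) 1 (fun k => H (k + 1))).det =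
      H 1 * (H 1 - H (m + 3)) ^ (m + 1) +
        ∑ i : Fin (m + 1), (H 1 * H (m + 3 - i) - H 2 * H (m + 2 - i)) *
          (q * (H (m + 2) - H 0)) ^ (i : ℕ) * (H 1 - H (m + 3)) ^ (m - i) := by
  rw [← mul_one (det _), ← det_recurrenceColOp (n := m + 2) p q, ← det_mul,
    gCirc_one_mul_recurrenceColOp hrec, det_updateCol_one_updateCol_zero_upperBidiagonal]
  simp only [gCirc_one_apply, Fin.val_zero, Fin.val_one, Fin.val_succ, Finset.mul_sum,
    ← Finset.sum_sub_distrib]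
  rw [Fin.sum_univ_succ, Fin.sum_univ_succ]
  have h00 : (0 + (m + 2 - 0)) % (m + 2) = 0 := by simp
  have h10 : (1 + (m + 2 - 0)) % (m + 2) = 1 := by
    rw [Nat.sub_zero, Nat.add_mod_right, Nat.mod_eq_of_lt (by omega)]
  have h11 : (1 + (m + 2 - (0 + 1))) % (m + 2) = 0 := by
    rw [show 1 + (m + 2 - (0 + 1)) = m + 2 by omega, Nat.mod_self]
  have h0succ : ∀ x : ℕ, x ≤ m → (0 + (m + 2 - (x + 1))) % (m + 2) + 1 = m + 2 - x := by
    intro x hx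
    rw [Nat.mod_eq_of_lt (by omega)]
    omega
  have h1succ : ∀ x : ℕ, x < m →
      (1 + (m + 2 - (x + 1 + 1))) % (m + 2) + 1 = m + 3 - (x + 1) := by
    intro x hx
    rw [Nat.mod_eq_of_lt (by omega)]
    omega
  simp only [h00, h10, h11, h0succ _ (Nat.zero_le m), Fin.val_succ, Fin.val_zero]
  rw [Finset.sum_congr rfl fun (x : Fin m) _ => by rw [h0succ _ (by omega), h1succ _ x.isLt]]
  simp only [zero_add, one_add_one_eq_two, Nat.sub_zero, ← mul_assoc, ← sub_mul]
  ring

end Recurrence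

theorem sum_fin_eq_mul_sum_Icc_div {K : Type*} [Field K] (H : ℕ → K) {M : K} (N : K)
    (hM : M ≠ 0) (hH1 : H 1 ≠ 0) (m : ℕ) :
    ∑ i : Fin (m + 1), (H 1 * H (m + 3 - i) - H 2 * H (m + 2 - i)) * M ^ (i : ℕ) * N ^ (m - i) =
      H 1 * M ^ m * ∑ i ∈ Finset.Icc 1 (m + 1),
        (-(H 2 * H (i + 1)) / H 1 + H (i + 2)) * (N / M) ^ (i - 1) := by
  rw [Fin.sum_univ_eq_sum_range
    (fun i => (H 1 * H (m + 3 - i) - H 2 * H (m + 2 - i)) * M ^ i * N ^ (m - i)), Finset.mul_sum]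
  refine Finset.sum_nbij' (fun i => m + 1 - i) (fun i => m + 1 - i) ?_ ?_ ?_ ?_ fun i hi => ?_
  any_goals (intro i hi; simp only [Finset.mem_range, Finset.mem_Icc] at hi ⊢; omega)
  rw [Finset.mem_range] at hi
  rw [show m + 1 - i + 1 = m + 2 - i by omega, show m + 1 - i + 2 = m + 3 - i by omega,
    show m + 1 - i - 1 = m - i by omega, ← pow_mul_pow_sub M (show i ≤ m by omega), div_pow]
  field_simp
  ring

theorem det_gCirc_horadam_general
    (k : ℝ) (f g : ℝ → ℝ) (H : ℕ → ℝ)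
    (hrec : ∀ m : ℕ, H (m + 2) = f k * H (m + 1) + g k * H m)
    (n r : ℕ) (hn : 2 ≤ n)
    (M N : ℝ) (hM : M = g k * (H n - H 0)) (hN : N = H 1 - H (n + 1))
    (hH1ne : H 1 ≠ 0) (hMne : M ≠ 0) :
    (gCirc n r (fun m => H (m + 1))).det =
      (Qg n r).det *
        (H 1 * N ^ (n - 1) +
          H 1 * M ^ (n - 2) *
            ∑ i ∈ Finset.Icc 1 (n - 1),
              (-(H 2 * H (i + 1)) / H 1 + H (i + 2)) * (N / M) ^ (i - 1)) := by
  obtain ⟨m, rfl⟩ : ∃ m, n = m + 2 := ⟨n - 2, by omega⟩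
  rw [gCirc_eq_mul_gCirc_one, det_mul]
  congr 1
  rw [det_gCirc_one_of_recurrence hrec, ← hM, show m + 2 + 1 = m + 3 from rfl, ← hN,
    sum_fin_eq_mul_sum_Icc_div H N hMne hH1ne]
  rfl

/-- Determinant of the g-circulant matrix of generalized k-Horadam numbers. -/
theorem det_gCirc_horadam
    (k : ℝ) (hk : 0 < k) (f g : ℝ → ℝ) (hfg : f k ^ 2 + 4 * g k > 0)
    (a b : ℝ) (H : ℕ → ℝ) (hH0 : H 0 = a) (hH1 : H 1 = b)
    (hrec : ∀ m : ℕ, H (m + 2) = f k * H (m + 1) + g k * H m)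
    (n r : ℕ) (hn : 2 ≤ n) (hgcd : Nat.gcd n r = 1)
    (M N : ℝ) (hM : M = g k * (H n - H 0)) (hN : N = H 1 - H (n + 1))
    (hH1ne : H 1 ≠ 0) (hMne : M ≠ 0) :
    (gCirc n r (fun m => H (m + 1))).det =
      (Qg n r).det *
        (H 1 * N ^ (n - 1) +
          H 1 * M ^ (n - 2) *
            ∑ i ∈ Finset.Icc 1 (n - 1),
              (-(H 2 * H (i + 1)) / H 1 + H (i + 2)) * (N / M) ^ (i - 1)) :=
  det_gCirc_horadam_general k f g H hrec n r hn M N hM hN hH1ne hMne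
end
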